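/- arXiv:2404.17220 — 6 statements merged into one kernel-verified Lean document; each statement's English description precedes it below -/
import Mathlib

section
/- Let ε > 0 be such that (δ − ν − ε⁻¹α + μ)² + 4 ε⁻¹ β γ > 0, set d := ε⁻¹α − μ − δ + ν, Ω := Ω^ε, and for k ∈ ℝⁿ set λ^± := ½(ε⁻¹α − μ + δ − ν − 8π²‖k‖² ± Ω). Then for every t ∈ ℝ the matrix exponential of t·M_k^ε is given entrywise by: exp(t M_k^ε) = (1/(2Ω)) · !![(Ω + d)·e^{λ⁺t} + (Ω − d)·e^{λ⁻t}, 2ε⁻¹β·(e^{λ⁺t} − e^{λ⁻t}); 2γ·(e^{λ⁺t} − e^{λ⁻t}), (Ω − d)·e^{λ⁺t} + (Ω + d)·e^{λ⁻t}]. In particular, the unique solution of the linear ODE w′(t) = M_k^ε w(t), w(0) = w₀ ∈ ℝ², is w(t) = exp(t M_k^ε) w₀ with these entries. -/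
/-! For `M = !![a, b; c, e]` with eigenvalues `λ± = (a + e ± Ω) / 2`, `Ω ≠ 0`, the matrices
`P₊ = Ω⁻¹ (M - λ₋)` and `P₋ = Ω⁻¹ (λ₊ - M)` satisfy `M P± = λ± P±` and `P₊ + P₋ = 1`
(Cayley–Hamilton), so `s ↦ e^{λ₊ s} P₊ + e^{λ₋ s} P₋` solves `X' = M X`, `X 0 = 1`.
Solutions of `w' = M w` are unique since `exp (-s M) (w s)` has zero derivative. -/

open Real

namespace Matrix

variable {ι : Type*} [Fintype ι] [DecidableEq ι]

theorem eq_exp_smul_mulVec_of_hasDerivAt {M : Matrix ι ι ℝ} {w : ℝ → ι → ℝ}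
    (hw : ∀ s, HasDerivAt w (M *ᵥ w s) s) (t : ℝ) :
    w t = NormedSpace.exp (t • M) *ᵥ w 0 := by
  have hinv : NormedSpace.exp (t • M) * NormedSpace.exp (t • -M) = 1 := by
    rw [smul_neg, ← exp_add_of_commute (t • M) _ (Commute.refl _).neg_right, add_neg_cancel,
      NormedSpace.exp_zero]
  let _ := Matrix.linftyOpNormedRing (n := ι) (α := ℝ)
  let _ := Matrix.linftyOpNormedAlgebra (R := ℝ) (n := ι) (α := ℝ)
  let B := (mulVecBilin ℝ ℝ : Matrix ι ι ℝ →ₗ[ℝ] _).toContinuousBilinearMap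
  have hderiv : ∀ s, HasDerivAt (fun s ↦ NormedSpace.exp (s • -M) *ᵥ w s) 0 s := fun s ↦ by
    refine (B.hasDerivAt_of_bilinear (fun _ ↦ hasDerivAt_exp_smul_const (-M) s)
      (fun _ ↦ hw s)).congr_deriv ?_
    change _ *ᵥ (M *ᵥ w s) + (_ * -M) *ᵥ w s = 0
    rw [mulVec_mulVec, ← add_mulVec, mul_neg, add_neg_cancel, zero_mulVec]
  have hconst := is_const_of_deriv_eq_zero (fun s ↦ (hderiv s).differentiableAt)
    (fun s ↦ (hderiv s).deriv) t 0
  rw [← one_mulVec (w t), ← hinv, ← mulVec_mulVec, hconst, zero_smul, NormedSpace.exp_zero,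
    one_mulVec]

theorem exp_smul_eq_of_mul_eq_smul_of_add_eq_one {M P Q : Matrix ι ι ℝ} {a b : ℝ}
    (hP : M * P = a • P) (hQ : M * Q = b • Q) (hPQ : P + Q = 1) (t : ℝ) :
    NormedSpace.exp (t • M) = Real.exp (a * t) • P + Real.exp (b * t) • Q := by
  refine (ext_iff_mulVec.2 fun v ↦ ?_).symm
  let w : ℝ → ι → ℝ := fun s ↦ Real.exp (a * s) • (P *ᵥ v) + Real.exp (b * s) • (Q *ᵥ v)
  have hw : ∀ s, HasDerivAt w (M *ᵥ w s) s := fun s ↦ by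
    have hexp : ∀ c : ℝ, HasDerivAt (fun s ↦ Real.exp (c * s)) (c * Real.exp (c * s)) s :=
      fun c ↦ by simpa [mul_comm c] using ((hasDerivAt_id s).const_mul c).exp
    refine (((hexp a).smul_const (P *ᵥ v)).add ((hexp b).smul_const (Q *ᵥ v))).congr_deriv ?_
    simp only [w, mulVec_add, mulVec_smul, mulVec_mulVec, hP, hQ, smul_mulVec, smul_smul,
      mul_comm]
  have hw0 : w 0 = v := by simp [w, ← add_mulVec, hPQ]
  simpa [w, add_mulVec, smul_mulVec, hw0] using eq_exp_smul_mulVec_of_hasDerivAt hw t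

theorem exp_smul_fin_two {a b c e d Ω lP lM : ℝ} (hd : a - e = d) (hΩ : Ω ^ 2 = d ^ 2 + 4 * b * c)
    (hΩ0 : Ω ≠ 0) (hlP : 2 * lP = a + e + Ω) (hlM : 2 * lM = a + e - Ω) (t : ℝ) :
    NormedSpace.exp (t • !![a, b; c, e]) =
      (1 / (2 * Ω)) •
        !![(Ω + d) * Real.exp (lP * t) + (Ω - d) * Real.exp (lM * t),
           2 * b * (Real.exp (lP * t) - Real.exp (lM * t));
           2 * c * (Real.exp (lP * t) - Real.exp (lM * t)),
           (Ω - d) * Real.exp (lP * t) + (Ω + d) * Real.exp (lM * t)] := by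
  subst hd
  set P : Matrix (Fin 2) (Fin 2) ℝ := !![Ω + (a - e), 2 * b; 2 * c, Ω - (a - e)]
  set Q : Matrix (Fin 2) (Fin 2) ℝ := !![Ω - (a - e), -(2 * b); -(2 * c), Ω + (a - e)]
  have hP : !![a, b; c, e] * P = lP • P := by
    ext i j
    fin_cases i <;> fin_cases j <;> simp [P]
    · linear_combination (-(Ω + (a - e)) / 2) * hlP - (1 / 2) * hΩ
    · linear_combination (-b) * hlP
    · linear_combination (-c) * hlP
    · linear_combination (-(Ω - (a - e)) / 2) * hlP - (1 / 2) * hΩ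
  have hQ : !![a, b; c, e] * Q = lM • Q := by
    ext i j
    fin_cases i <;> fin_cases j <;> simp [Q]
    · linear_combination (-(Ω - (a - e)) / 2) * hlM + (1 / 2) * hΩ
    · linear_combination b * hlM
    · linear_combination c * hlM
    · linear_combination (-(Ω + (a - e)) / 2) * hlM + (1 / 2) * hΩ
  have hPQ : (1 / (2 * Ω)) • P + (1 / (2 * Ω)) • Q = 1 := by
    ext i j
    fin_cases i <;> fin_cases j <;> simp [P, Q] <;> field_simp <;> ring
  rw [exp_smul_eq_of_mul_eq_smul_of_add_eq_one (by rw [mul_smul_comm, hP, smul_comm])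
    (by rw [mul_smul_comm, hQ, smul_comm]) hPQ, smul_comm, smul_comm _ (1 / (2 * Ω)), ← smul_add]
  congr 1
  ext i j
  fin_cases i <;> fin_cases j <;> simp [P, Q] <;> ring

end Matrix

theorem stmt_4_general (n : ℕ) (α β γ δ μ ν ε : ℝ)
    (hrad : 0 < (δ - ν - ε⁻¹ * α + μ) ^ 2 + 4 * ε⁻¹ * β * γ)
    (k : EuclideanSpace ℝ (Fin n)) (t : ℝ) :
    let Ω : ℝ := Real.sqrt ((δ - ν - ε⁻¹ * α + μ) ^ 2 + 4 * ε⁻¹ * β * γ)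
    let d : ℝ := ε⁻¹ * α - μ - δ + ν
    let M : Matrix (Fin 2) (Fin 2) ℝ :=
      !![ε⁻¹ * α - μ - 4 * π ^ 2 * ‖k‖ ^ 2, ε⁻¹ * β;
         γ, δ - ν - 4 * π ^ 2 * ‖k‖ ^ 2]
    let lamP : ℝ := (1 / 2) * (ε⁻¹ * α - μ + δ - ν - 8 * π ^ 2 * ‖k‖ ^ 2 + Ω)
    let lamM : ℝ := (1 / 2) * (ε⁻¹ * α - μ + δ - ν - 8 * π ^ 2 * ‖k‖ ^ 2 - Ω)
    NormedSpace.exp (t • M) =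
        (1 / (2 * Ω)) •
          !![(Ω + d) * Real.exp (lamP * t) + (Ω - d) * Real.exp (lamM * t),
             2 * ε⁻¹ * β * (Real.exp (lamP * t) - Real.exp (lamM * t));
             2 * γ * (Real.exp (lamP * t) - Real.exp (lamM * t)),
             (Ω - d) * Real.exp (lamP * t) + (Ω + d) * Real.exp (lamM * t)] ∧
      ∀ (w₀ : Fin 2 → ℝ) (w : ℝ → Fin 2 → ℝ),
        (∀ s : ℝ, HasDerivAt w (M.mulVec (w s)) s) → w 0 = w₀ →
          w t = (NormedSpace.exp (t • M)).mulVec w₀ := by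
  intro Ω d M lamP lamM
  refine ⟨?_, fun w₀ w hw hw0 ↦ hw0 ▸ Matrix.eq_exp_smul_mulVec_of_hasDerivAt hw t⟩
  have hΩ : Ω ^ 2 = d ^ 2 + 4 * (ε⁻¹ * β) * γ := by
    simp only [Ω, d, Real.sq_sqrt hrad.le]
    ring
  rw [Matrix.exp_smul_fin_two (lP := lamP) (lM := lamM) (by ring) hΩ (Real.sqrt_pos.2 hrad).ne'
    (by ring) (by ring), mul_assoc 2 ε⁻¹ β]

/-- Explicit entrywise formula for the matrix exponential `exp(t M_k^ε)`,
and the fact that `t ↦ exp(t M_k^ε) w₀` is the unique solution of `w′ = M_k^ε w`, `w(0) = w₀`. -/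
theorem stmt_4 (n : ℕ) (hn : 1 ≤ n) (α β γ δ μ ν ε : ℝ) (hε : 0 < ε)
    (hrad : 0 < (δ - ν - ε⁻¹ * α + μ) ^ 2 + 4 * ε⁻¹ * β * γ)
    (k : EuclideanSpace ℝ (Fin n)) (t : ℝ) :
    let Ω : ℝ := Real.sqrt ((δ - ν - ε⁻¹ * α + μ) ^ 2 + 4 * ε⁻¹ * β * γ)
    let d : ℝ := ε⁻¹ * α - μ - δ + ν
    let M : Matrix (Fin 2) (Fin 2) ℝ :=
      !![ε⁻¹ * α - μ - 4 * π ^ 2 * ‖k‖ ^ 2, ε⁻¹ * β;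
         γ, δ - ν - 4 * π ^ 2 * ‖k‖ ^ 2]
    let lamP : ℝ := (1 / 2) * (ε⁻¹ * α - μ + δ - ν - 8 * π ^ 2 * ‖k‖ ^ 2 + Ω)
    let lamM : ℝ := (1 / 2) * (ε⁻¹ * α - μ + δ - ν - 8 * π ^ 2 * ‖k‖ ^ 2 - Ω)
    NormedSpace.exp (t • M) =
        (1 / (2 * Ω)) •
          !![(Ω + d) * Real.exp (lamP * t) + (Ω - d) * Real.exp (lamM * t),
             2 * ε⁻¹ * β * (Real.exp (lamP * t) - Real.exp (lamM * t));
             2 * γ * (Real.exp (lamP * t) - Real.exp (lamM * t)),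
             (Ω - d) * Real.exp (lamP * t) + (Ω + d) * Real.exp (lamM * t)] ∧
      ∀ (w₀ : Fin 2 → ℝ) (w : ℝ → Fin 2 → ℝ),
        (∀ s : ℝ, HasDerivAt w (M.mulVec (w s)) s) → w 0 = w₀ →
          w t = (NormedSpace.exp (t • M)).mulVec w₀ :=
  stmt_4_general n α β γ δ μ ν ε hrad k t
end

section
/- Let β ≠ 0 and let ε > 0 be such that (δ − ν − ε⁻¹α + μ)² + 4 ε⁻¹ β γ > 0, and fix σ ∈ {1, −1}. Then for every k ∈ ℝⁿ the line L_σ^ε := {(x, y) ∈ ℝ² : (ε(δ − ν + μ) − α + σ·ε·Ω^ε)·x − 2β·y = 0} is invariant under the flow of the linear ODE w′ = M_k^ε w; that is, for every w₀ ∈ L_σ^ε and every t ∈ ℝ one has exp(t M_k^ε)·w₀ ∈ L_σ^ε. -/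
/-! The row vector `r = (c, -2β)` is a left eigenvector of `M_k^ε` for every `k`: the Laplacian only
shifts `M_k^ε` by a scalar, and the eigenvector equation reduces to `c` being a root of
`c² - 2(ε(δ - ν + μ) - α)c = 4εβγ`, which is how the slope `c` of `L_σ^ε` is chosen.
Hence `r ⬝ᵥ exp(tM) w = e^{tλ} (r ⬝ᵥ w)`, and `L_σ^ε = ker r` is invariant. -/

open Real

open scoped Matrix

namespace Matrix

variable {m 𝕂 : Type*} [Fintype m] [DecidableEq m] [RCLike 𝕂]

attribute [local instance] Matrix.linftyOpNormedRing Matrix.linftyOpNormedAlgebra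

theorem vec2_vecMul_fin_two {R : Type*} [NonUnitalNonAssocSemiring R] (x y a b c d : R) :
    ![x, y] ᵥ* !![a, b; c, d] = ![x * a + y * c, x * b + y * d] := by
  ext j
  fin_cases j <;> simp [vecMul, dotProduct, Fin.sum_univ_two]

theorem vecMul_exp_of_vecMul_eq_smul {A : Matrix m m 𝕂} {r : m → 𝕂} {l : 𝕂}
    (h : r ᵥ* A = l • r) : r ᵥ* NormedSpace.exp A = NormedSpace.exp l • r := by
  -- `replicateRow m r` intertwines `A` with the scalar matrix `l`, hence `exp A` with `exp l`
  have hsemiconj : SemiconjBy (replicateRow m r) A (algebraMap 𝕂 _ l) := by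
    rw [SemiconjBy, ← replicateRow_vecMul, h, Algebra.algebraMap_eq_smul_one, smul_one_mul]
    rfl
  have hexp := hsemiconj.exp_right
  rw [SemiconjBy, ← replicateRow_vecMul, ← NormedSpace.algebraMap_exp_comm,
    Algebra.algebraMap_eq_smul_one, smul_one_mul] at hexp
  funext j
  exact congrFun (congrFun hexp j) j

theorem dotProduct_exp_smul_mulVec_eq_zero {A : Matrix m m 𝕂} {r w : m → 𝕂} {l : 𝕂}
    (h : r ᵥ* A = l • r) (hw : r ⬝ᵥ w = 0) (t : 𝕂) :
    r ⬝ᵥ (NormedSpace.exp (t • A) *ᵥ w) = 0 := by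
  have htA : r ᵥ* (t • A) = (t * l) • r := by
    rw [vecMul_smul, h, smul_smul]
  rw [dotProduct_mulVec, vecMul_exp_of_vecMul_eq_smul htA, smul_dotProduct, hw, smul_zero]

end Matrix

theorem add_sign_mul_sqrt_sq_sub {a ε s σ : ℝ} (hσ : σ = 1 ∨ σ = -1) (hs : 0 ≤ s) :
    (a + σ * (ε * √s)) ^ 2 - 2 * a * (a + σ * (ε * √s)) = ε ^ 2 * s - a ^ 2 := by
  have hσ2 : σ ^ 2 = 1 := by rcases hσ with rfl | rfl <;> norm_num
  linear_combination (ε ^ 2 * √s ^ 2) * hσ2 + ε ^ 2 * Real.sq_sqrt hs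

theorem vecMul_fastReactionSymbol_eq_smul {α β γ δ μ ν ε K c : ℝ} (hε : ε ≠ 0)
    (hc : c ^ 2 - 2 * (ε * (δ - ν + μ) - α) * c = 4 * ε * β * γ) :
    ![c, -(2 * β)] ᵥ* !![ε⁻¹ * α - μ - K, ε⁻¹ * β; γ, δ - ν - K]
      = (δ - ν - K - c / (2 * ε)) • ![c, -(2 * β)] := by
  rw [Matrix.vec2_vecMul_fin_two, Matrix.smul_vec2, smul_eq_mul, smul_eq_mul]
  congr 2
  · field_simp
    linear_combination hc
  · field_simp
    ring

theorem stmt_8_general (n : ℕ) (α β γ δ μ ν ε : ℝ) (hε : 0 < ε)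
    (hrad : 0 < (δ - ν - ε⁻¹ * α + μ) ^ 2 + 4 * ε⁻¹ * β * γ)
    (σ : ℝ) (hσ : σ = 1 ∨ σ = -1) (k : EuclideanSpace ℝ (Fin n)) :
    let c : ℝ := ε * (δ - ν + μ) - α
      + σ * (ε * Real.sqrt ((δ - ν - ε⁻¹ * α + μ) ^ 2 + 4 * ε⁻¹ * β * γ))
    let M : Matrix (Fin 2) (Fin 2) ℝ :=
      !![ε⁻¹ * α - μ - 4 * π ^ 2 * ‖k‖ ^ 2, ε⁻¹ * β;
         γ, δ - ν - 4 * π ^ 2 * ‖k‖ ^ 2]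
    ∀ w₀ : Fin 2 → ℝ, c * w₀ 0 - 2 * β * w₀ 1 = 0 →
      ∀ t : ℝ,
        c * ((NormedSpace.exp (t • M)).mulVec w₀) 0
          - 2 * β * ((NormedSpace.exp (t • M)).mulVec w₀) 1 = 0 := by
  intro c M w₀ hw t
  have hc : c ^ 2 - 2 * (ε * (δ - ν + μ) - α) * c = 4 * ε * β * γ := by
    rw [add_sign_mul_sqrt_sq_sub hσ hrad.le]
    field_simp
    ring
  have hline : ∀ w : Fin 2 → ℝ, ![c, -(2 * β)] ⬝ᵥ w = c * w 0 - 2 * β * w 1 := fun w => by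
    rw [Matrix.vec2_dotProduct]
    simp only [Matrix.cons_val_zero, Matrix.cons_val_one]
    ring
  rw [← hline] at hw ⊢
  exact Matrix.dotProduct_exp_smul_mulVec_eq_zero (vecMul_fastReactionSymbol_eq_smul hε.ne' hc) hw t

/-- For `β ≠ 0` and each sign `σ ∈ {1, −1}`, the line
`L_σ^ε = {(x,y) : (ε(δ − ν + μ) − α + σ·ε·Ω^ε)x − 2βy = 0}` is invariant under the flow
`exp(t M_k^ε)` of the Fourier-transformed linear fast-reaction system, for every `k ∈ ℝⁿ`. -/
theorem stmt_8 (n : ℕ) (hn : 1 ≤ n) (α β γ δ μ ν ε : ℝ) (hβ : β ≠ 0) (hε : 0 < ε)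
    (hrad : 0 < (δ - ν - ε⁻¹ * α + μ) ^ 2 + 4 * ε⁻¹ * β * γ)
    (σ : ℝ) (hσ : σ = 1 ∨ σ = -1) (k : EuclideanSpace ℝ (Fin n)) :
    let c : ℝ := ε * (δ - ν + μ) - α
      + σ * (ε * Real.sqrt ((δ - ν - ε⁻¹ * α + μ) ^ 2 + 4 * ε⁻¹ * β * γ))
    let M : Matrix (Fin 2) (Fin 2) ℝ :=
      !![ε⁻¹ * α - μ - 4 * π ^ 2 * ‖k‖ ^ 2, ε⁻¹ * β;
         γ, δ - ν - 4 * π ^ 2 * ‖k‖ ^ 2]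
    ∀ w₀ : Fin 2 → ℝ, c * w₀ 0 - 2 * β * w₀ 1 = 0 →
      ∀ t : ℝ,
        c * ((NormedSpace.exp (t • M)).mulVec w₀) 0
          - 2 * β * ((NormedSpace.exp (t • M)).mulVec w₀) 1 = 0 :=
  stmt_8_general n α β γ δ μ ν ε hε hrad σ hσ k
end

section
/- Let α, β, γ, δ, μ, ν be real numbers with α < 0 and β ≠ 0, and let M > 0. For ε > 0 set c_ε := ε(δ − ν + μ) − α + √((ε(δ − ν + μ) − α)² + 4 ε β γ), and define the truncated slow and critical manifolds L_ε := {p ∈ ℝ² : c_ε·p₁ − 2β·p₂ = 0} ∩ closedBall(0, M) and L₀ := {p ∈ ℝ² : α·p₁ + β·p₂ = 0} ∩ closedBall(0, M). Then there exist constants C > 0 and ε₀ > 0 such that for all ε ∈ (0, ε₀] the Hausdorff distance satisfies d_H(L_ε, L₀) ≤ C·ε. -/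
/-!
Both manifolds are lines through the origin, the critical one of slope `-α / β` and the slow one
of slope `c_ε / (2β)`. Truncated to a ball of radius `M`, two such lines are within Hausdorff
distance `2M` times the difference of their slopes, and `c_ε + 2α` is a differentiable function
of `ε` vanishing at `ε = 0` (there the root is `√(α²) = -α` as `α < 0`), hence `O(ε)`.
-/

open Real Metric

theorem StarConvex.exists_mem_closedBall_dist_le_two_mul {E : Type*} [SeminormedAddCommGroup E]
    [NormedSpace ℝ E] {s : Set E} (hs : StarConvex ℝ 0 s) {M : ℝ} {p q : E}
    (hp : p ∈ closedBall (0 : E) M) (hq : q ∈ s) :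
    ∃ q' ∈ s ∩ closedBall 0 M, dist p q' ≤ 2 * dist p q := by
  rw [mem_closedBall_zero_iff] at hp
  rcases le_or_gt ‖q‖ M with hqM | hqM
  · exact ⟨q, ⟨hq, mem_closedBall_zero_iff.2 hqM⟩, by linarith [dist_nonneg (x := p) (y := q)]⟩
  have hq0 : 0 < ‖q‖ := (norm_nonneg p).trans_lt (hp.trans_lt hqM)
  set t := M / ‖q‖
  have ht0 : 0 ≤ t := div_nonneg ((norm_nonneg p).trans hp) hq0.le
  have ht1 : t ≤ 1 := (div_le_one hq0).2 hqM.le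
  have htq : t * ‖q‖ = M := div_mul_cancel₀ _ hq0.ne'
  refine ⟨t • q, ⟨hs.smul_mem hq ht0 ht1, ?_⟩, ?_⟩
  · rw [mem_closedBall_zero_iff, norm_smul, Real.norm_of_nonneg ht0, htq]
  have hq_tq : dist q (t • q) = ‖q‖ - M := by
    rw [dist_eq_norm, show q - t • q = (1 - t) • q by rw [sub_smul, one_smul], norm_smul,
      Real.norm_of_nonneg (by linarith), sub_mul, one_mul, htq]
  calc dist p (t • q) ≤ dist p q + dist q (t • q) := dist_triangle _ _ _
    _ ≤ dist p q + (‖q‖ - ‖p‖) := by rw [hq_tq]; linarith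
    _ ≤ 2 * dist p q := by linarith [norm_sub_norm_le q p, dist_eq_norm q p, dist_comm p q]

def lineOfSlope (m : ℝ) : Set (ℝ × ℝ) := {p | p.2 = m * p.1}

theorem starConvex_lineOfSlope (m : ℝ) : StarConvex ℝ 0 (lineOfSlope m) := by
  intro p hp a b _ _ _
  simp only [lineOfSlope, Set.mem_ofPred_eq, smul_zero, zero_add, Prod.smul_fst, Prod.smul_snd,
    smul_eq_mul] at hp ⊢
  rw [hp]; ring

theorem setOf_mul_fst_add_mul_snd_eq_zero {a b : ℝ} (hb : b ≠ 0) :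
    {p : ℝ × ℝ | a * p.1 + b * p.2 = 0} = lineOfSlope (-a / b) := by
  ext p
  simp only [lineOfSlope, Set.mem_ofPred_eq]
  field_simp
  constructor <;> intro h <;> linarith

theorem exists_mem_lineOfSlope_dist_le {m m' M : ℝ} {p : ℝ × ℝ}
    (hp : p ∈ lineOfSlope m ∩ closedBall 0 M) :
    ∃ q ∈ lineOfSlope m' ∩ closedBall 0 M, dist p q ≤ 2 * M * |m - m'| := by
  obtain ⟨hpm, hpM⟩ := hp
  have hp1 : |p.1| ≤ M := (norm_fst_le p).trans (mem_closedBall_zero_iff.1 hpM)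
  have hpq₀ : dist p (p.1, m' * p.1) = |m - m'| * |p.1| := by
    rw [Prod.dist_eq, dist_self, Real.dist_eq, hpm, ← sub_mul, abs_mul]
    exact max_eq_right (by positivity)
  obtain ⟨q, hq, hpq⟩ :=
    (starConvex_lineOfSlope m').exists_mem_closedBall_dist_le_two_mul hpM (q := (p.1, m' * p.1)) rfl
  refine ⟨q, hq, hpq.trans ?_⟩
  rw [hpq₀]
  nlinarith [abs_nonneg (m - m')]

theorem hausdorffDist_lineOfSlope_inter_closedBall_le (m m' : ℝ) {M : ℝ} (hM : 0 ≤ M) :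
    hausdorffDist (lineOfSlope m ∩ closedBall 0 M) (lineOfSlope m' ∩ closedBall 0 M)
      ≤ 2 * M * |m - m'| :=
  hausdorffDist_le_of_mem_dist (by positivity) (fun _ hp => exists_mem_lineOfSlope_dist_le hp)
    (fun _ hp => abs_sub_comm m m' ▸ exists_mem_lineOfSlope_dist_le hp)

theorem exists_abs_le_mul_of_differentiableAt_zero {g : ℝ → ℝ} (hg : DifferentiableAt ℝ g 0)
    (hg0 : g 0 = 0) : ∃ C > 0, ∃ ε₀ > 0, ∀ ε ∈ Set.Ioc (0 : ℝ) ε₀, |g ε| ≤ C * ε := by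
  obtain ⟨C, hC, hbound⟩ := hg.isBigO_sub.exists_pos
  obtain ⟨r, hr, hball⟩ := Metric.eventually_nhds_iff.1 hbound.bound
  refine ⟨C, hC, r / 2, by positivity, fun ε ⟨hε0, hεr⟩ => ?_⟩
  have := @hball ε (by rw [Real.dist_eq, sub_zero, abs_of_pos hε0]; linarith)
  simpa [hg0, abs_of_pos hε0] using this

theorem exists_abs_slowCoeff_add_two_mul_le (s α β γ : ℝ) (hα : α < 0) :
    ∃ C > 0, ∃ ε₀ > 0, ∀ ε ∈ Set.Ioc (0 : ℝ) ε₀,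
      |ε * s - α + √((ε * s - α) ^ 2 + 4 * ε * β * γ) + 2 * α| ≤ C * ε := by
  refine exists_abs_le_mul_of_differentiableAt_zero ?_ ?_
  · have hrad : ((0 : ℝ) * s - α) ^ 2 + 4 * 0 * β * γ ≠ 0 := by simp [hα.ne]
    fun_prop (disch := exact hrad)
  · simp only [zero_mul, zero_sub, mul_zero, add_zero, neg_sq, sqrt_sq_eq_abs, abs_of_neg hα]
    ring

/-- On bounded sets, the attracting slow manifold
`{p : c_ε p₁ − 2β p₂ = 0}` is `O(ε)`-close in Hausdorff distance to the critical manifold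
`{p : α p₁ + β p₂ = 0}`. -/
theorem stmt_10 (α β γ δ μ ν : ℝ) (hα : α < 0) (hβ : β ≠ 0) (M : ℝ) (hM : 0 < M) :
    ∃ C > (0 : ℝ), ∃ ε₀ > (0 : ℝ), ∀ ε ∈ Set.Ioc (0 : ℝ) ε₀,
      Metric.hausdorffDist
        ({p : ℝ × ℝ |
            (ε * (δ - ν + μ) - α
              + Real.sqrt ((ε * (δ - ν + μ) - α) ^ 2 + 4 * ε * β * γ)) * p.1
              - 2 * β * p.2 = 0}
          ∩ Metric.closedBall (0 : ℝ × ℝ) M)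
        ({p : ℝ × ℝ | α * p.1 + β * p.2 = 0} ∩ Metric.closedBall (0 : ℝ × ℝ) M)
        ≤ C * ε := by
  obtain ⟨C, hC, ε₀, hε₀, hbound⟩ := exists_abs_slowCoeff_add_two_mul_le (δ - ν + μ) α β γ hα
  refine ⟨M / |β| * C, by positivity, ε₀, hε₀, fun ε hε => ?_⟩
  set c := ε * (δ - ν + μ) - α + √((ε * (δ - ν + μ) - α) ^ 2 + 4 * ε * β * γ)
  have h2β : 2 * β ≠ 0 := mul_ne_zero two_ne_zero hβ
  have hslow : {p : ℝ × ℝ | c * p.1 - 2 * β * p.2 = 0} = lineOfSlope (c / (2 * β)) := by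
    simpa only [neg_mul, ← sub_eq_add_neg, neg_div_neg_eq] using
      setOf_mul_fst_add_mul_snd_eq_zero (a := c) (neg_ne_zero.2 h2β)
  rw [hslow, setOf_mul_fst_add_mul_snd_eq_zero hβ]
  calc _ ≤ 2 * M * |c / (2 * β) - -α / β| :=
        hausdorffDist_lineOfSlope_inter_closedBall_le _ _ hM.le
    _ = M / |β| * |c + 2 * α| := by
        rw [show c / (2 * β) - -α / β = (c + 2 * α) / (2 * β) by field_simp; ring, abs_div,
          abs_mul, abs_two]
        field_simp
    _ ≤ M / |β| * (C * ε) := by gcongr; exact hbound ε hε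
    _ = M / |β| * C * ε := by ring
end

section
/- Let α, β, γ, δ, μ, ν be real numbers with α < 0 and β, γ, δ ≠ 0, and set κ := −ν − α⁻¹βγ + δ. For ε > 0 set c_ε := ε(δ − ν + μ) − α + √((ε(δ − ν + μ) − α)² + 4 ε β γ). Then for every k ∈ ℝⁿ, every t ≥ 0, and every v₀ ∈ ℝ: (i) 2β/c_ε → −β/α as ε → 0⁺; (ii) the slow-manifold-restricted semiflow converges, i.e. e^{(−4π²‖k‖² − ν + δ + 2βγ/c_ε)·t}·v₀ → e^{(−4π²‖k‖² + κ)·t}·v₀ as ε → 0⁺; and (iii) (2β/c_ε)·e^{(−4π²‖k‖² − ν + δ + 2βγ/c_ε)·t}·v₀ → −α⁻¹β·e^{(−4π²‖k‖² + κ)·t}·v₀ as ε → 0⁺. -/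
open Real Filter Topology

/-! As `ε → 0⁺` the root `c_ε` tends to `-α + |α| = -2α ≠ 0`, and every quantity in the
statement is a continuous function of `c_ε` near that value; at `c = -2α` the slow rate
`-ν + δ + 2βγ/c` is exactly `κ`. -/

theorem Filter.Tendsto.add_sqrt_sq_add {X : Type*} {l : Filter X} {f g : X → ℝ} {a : ℝ}
    (hf : Tendsto f l (𝓝 a)) (hg : Tendsto g l (𝓝 0)) :
    Tendsto (fun x => f x + √(f x ^ 2 + g x)) l (𝓝 (a + |a|)) := by
  have hroot := ((hf.pow 2).add hg).sqrt
  rw [add_zero, Real.sqrt_sq_eq_abs] at hroot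
  exact hf.add hroot

theorem stmt_11_general (n : ℕ) (α β γ δ μ ν : ℝ) (hα : α < 0)
    (κ : ℝ) (hκ : κ = -ν - α⁻¹ * β * γ + δ)
    (k : EuclideanSpace ℝ (Fin n)) (t : ℝ) (v₀ : ℝ) :
    let c : ℝ → ℝ := fun ε =>
      ε * (δ - ν + μ) - α + Real.sqrt ((ε * (δ - ν + μ) - α) ^ 2 + 4 * ε * β * γ)
    Filter.Tendsto (fun ε : ℝ => 2 * β / c ε) (𝓝[>] 0) (𝓝 (-β / α)) ∧
    Filter.Tendsto
      (fun ε : ℝ =>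
        Real.exp ((-4 * π ^ 2 * ‖k‖ ^ 2 - ν + δ + 2 * β * γ / c ε) * t) * v₀)
      (𝓝[>] 0) (𝓝 (Real.exp ((-4 * π ^ 2 * ‖k‖ ^ 2 + κ) * t) * v₀)) ∧
    Filter.Tendsto
      (fun ε : ℝ =>
        (2 * β / c ε) * Real.exp ((-4 * π ^ 2 * ‖k‖ ^ 2 - ν + δ + 2 * β * γ / c ε) * t) * v₀)
      (𝓝[>] 0)
      (𝓝 (-α⁻¹ * β * Real.exp ((-4 * π ^ 2 * ‖k‖ ^ 2 + κ) * t) * v₀)) := by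
  intro c
  have hα0 : α ≠ 0 := hα.ne
  have hc0 : -2 * α ≠ 0 := by positivity
  have hc : Tendsto c (𝓝[>] 0) (𝓝 (-2 * α)) := by
    have hlin : Tendsto (fun ε : ℝ => ε * (δ - ν + μ) - α) (𝓝 0) (𝓝 (-α)) :=
      (by fun_prop : Continuous fun ε : ℝ => ε * (δ - ν + μ) - α).tendsto' 0 _ (by ring)
    have hpert : Tendsto (fun ε : ℝ => 4 * ε * β * γ) (𝓝 0) (𝓝 0) :=
      (by fun_prop : Continuous fun ε : ℝ => 4 * ε * β * γ).tendsto' 0 _ (by ring)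
    have hroot := hlin.add_sqrt_sq_add hpert
    rw [abs_of_pos (neg_pos.mpr hα), show -α + -α = -2 * α by ring] at hroot
    exact hroot.mono_left nhdsWithin_le_nhds
  have hinv : Tendsto (fun ε => (c ε)⁻¹) (𝓝[>] 0) (𝓝 (-2 * α)⁻¹) := hc.inv₀ hc0
  have hfast : Tendsto (fun ε => 2 * β / c ε) (𝓝[>] 0) (𝓝 (-β / α)) := by
    convert hinv.const_mul (2 * β) using 2
    · rw [div_eq_mul_inv]
    · field_simp
  have hrate : Tendsto (fun ε => (-4 * π ^ 2 * ‖k‖ ^ 2 - ν + δ + 2 * β * γ / c ε) * t)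
      (𝓝[>] 0) (𝓝 ((-4 * π ^ 2 * ‖k‖ ^ 2 + κ) * t)) := by
    convert ((hinv.const_mul (2 * β * γ)).const_add (-4 * π ^ 2 * ‖k‖ ^ 2 - ν + δ)).mul_const t
      using 2
    · rw [div_eq_mul_inv]
    · rw [hκ]
      field_simp
      ring
  have hslow := (Real.continuous_exp.tendsto _).comp hrate
  refine ⟨hfast, hslow.mul_const v₀, ?_⟩
  convert (hfast.mul hslow).mul_const v₀ using 2
  simp only [Function.comp_apply]
  ring

/-- Convergence of the slow-manifold-restricted dynamics to the dynamics on
the critical manifold, for each Fourier mode `k`: with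
`c_ε = ε(δ − ν + μ) − α + √((ε(δ − ν + μ) − α)² + 4εβγ)` and `κ = −ν − α⁻¹βγ + δ`,
(i) `2β/c_ε → −β/α`; (ii) the restricted semiflow converges; (iii) so does the fast component. -/
theorem stmt_11 (n : ℕ) (hn : 1 ≤ n) (α β γ δ μ ν : ℝ) (hα : α < 0)
    (hβ : β ≠ 0) (hγ : γ ≠ 0) (hδ : δ ≠ 0)
    (κ : ℝ) (hκ : κ = -ν - α⁻¹ * β * γ + δ)
    (k : EuclideanSpace ℝ (Fin n)) (t : ℝ) (ht : 0 ≤ t) (v₀ : ℝ) :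
    let c : ℝ → ℝ := fun ε =>
      ε * (δ - ν + μ) - α + Real.sqrt ((ε * (δ - ν + μ) - α) ^ 2 + 4 * ε * β * γ)
    Filter.Tendsto (fun ε : ℝ => 2 * β / c ε) (𝓝[>] 0) (𝓝 (-β / α)) ∧
    Filter.Tendsto
      (fun ε : ℝ =>
        Real.exp ((-4 * π ^ 2 * ‖k‖ ^ 2 - ν + δ + 2 * β * γ / c ε) * t) * v₀)
      (𝓝[>] 0) (𝓝 (Real.exp ((-4 * π ^ 2 * ‖k‖ ^ 2 + κ) * t) * v₀)) ∧
    Filter.Tendsto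
      (fun ε : ℝ =>
        (2 * β / c ε) * Real.exp ((-4 * π ^ 2 * ‖k‖ ^ 2 - ν + δ + 2 * β * γ / c ε) * t) * v₀)
      (𝓝[>] 0)
      (𝓝 (-α⁻¹ * β * Real.exp ((-4 * π ^ 2 * ‖k‖ ^ 2 + κ) * t) * v₀)) :=
  stmt_11_general n α β γ δ μ ν hα κ hκ k t v₀
end

section
/- Let α < 0, β ≠ 0, μ, κ ∈ ℝ, and let ε > 0 satisfy −μ + ε⁻¹α < κ (equivalently −α + εμ + εκ > 0). Fix k ∈ ℝⁿ, u₀, v₀ ∈ ℝ, and set A := −4π²‖k‖² − μ + ε⁻¹α. Let φ, ψ : ℝ → ℝ be differentiable functions with φ(0) = ψ(0) = u₀ satisfying, for all t ≥ 0, φ′(t) = A·φ(t) + (ε⁻¹β − α⁻¹β(μ + κ))·e^{(−4π²‖k‖² + κ)t}·v₀ and ψ′(t) = A·ψ(t) + ε⁻¹β·e^{(−4π²‖k‖² + κ)t}·v₀. Then for every t ≥ 0: |φ(t) − ψ(t)| ≤ ε · (|α⁻¹β(μ + κ)|/(−α + εμ + εκ)) · e^{κt} · |v₀|. -/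
open Real

/-!
The difference `δ = φ - ψ` solves `δ' = A δ - c v₀ e^{B t}` with `δ 0 = 0`, where
`B = -4π²‖k‖² + κ` and `c = α⁻¹β(μ + κ)`. The hypothesis on `κ` says exactly that `A < B`, so
Duhamel's formula gives `δ t = c v₀ (e^{A t} - e^{B t}) / (B - A)`, whose modulus is at most
`|c| |v₀| e^{κ t} / (B - A)`; finally `ε (B - A) = -α + εμ + εκ`.
-/

theorem eq_exp_mul_of_hasDerivAt_mul_self {a : ℝ} {z : ℝ → ℝ}
    (hz : ∀ t, 0 ≤ t → HasDerivAt z (a * z t) t) :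
    ∀ t, 0 ≤ t → z t = exp (a * t) * z 0 := by
  set g : ℝ → ℝ := fun t => exp (-a * t) * z t
  have hg : ∀ t, 0 ≤ t → HasDerivAt g 0 t := by
    intro t ht
    have hexp : HasDerivAt (fun t => exp (-a * t)) (exp (-a * t) * -a) t := by
      simpa using ((hasDerivAt_id t).const_mul (-a)).exp
    refine (hexp.mul (hz t ht)).congr_deriv ?_
    ring
  intro t ht
  have hgt : g t = g 0 :=
    constant_of_has_deriv_right_zero
      (fun s hs => (hg s hs.1).continuousAt.continuousWithinAt)
      (fun s hs => (hg s hs.1).hasDerivWithinAt) t ⟨ht, le_rfl⟩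
  have hinv : exp (a * t) * exp (-a * t) = 1 := by
    rw [← exp_add]; ring_nf; exact exp_zero
  calc z t = exp (a * t) * g t := by
        simp only [g, ← mul_assoc, hinv, one_mul]
    _ = exp (a * t) * z 0 := by rw [hgt]; simp [g]

theorem eq_of_hasDerivAt_linear_exp_forcing {a b l : ℝ} (hl : l ≠ a) {y : ℝ → ℝ}
    (hy0 : y 0 = 0) (hy : ∀ t, 0 ≤ t → HasDerivAt y (a * y t + b * exp (l * t)) t) :
    ∀ t, 0 ≤ t → y t = b * (exp (l * t) - exp (a * t)) / (l - a) := by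
  have hla : l - a ≠ 0 := sub_ne_zero.mpr hl
  set p : ℝ → ℝ := fun t => b * (exp (l * t) - exp (a * t)) / (l - a)
  have hp : ∀ t, HasDerivAt p (a * p t + b * exp (l * t)) t := by
    intro t
    have hl' := ((hasDerivAt_id t).const_mul l).exp
    have ha' := ((hasDerivAt_id t).const_mul a).exp
    refine (((hl'.sub ha').const_mul b).div_const (l - a)).congr_deriv ?_
    simp only [p, id]
    field_simp
    ring
  have hz := eq_exp_mul_of_hasDerivAt_mul_self (a := a) (z := fun t => y t - p t)
    (fun t ht => ((hy t ht).sub (hp t)).congr_deriv (by ring))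
  intro t ht
  have h := hz t ht
  simp only [hy0, p, mul_zero, exp_zero, sub_self, zero_div, mul_zero] at h
  exact sub_eq_zero.mp h

theorem abs_mul_exp_sub_exp_div_le {a l κ t : ℝ} (hal : a < l) (hlκ : l ≤ κ) (ht : 0 ≤ t)
    (b : ℝ) : |b * (exp (l * t) - exp (a * t)) / (l - a)| ≤ |b| * exp (κ * t) / (l - a) := by
  have hpos : 0 < l - a := sub_pos.mpr hal
  have hgap : 0 ≤ exp (l * t) - exp (a * t) :=
    sub_nonneg.mpr (exp_le_exp.mpr (mul_le_mul_of_nonneg_right hal.le ht))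
  have hκ : exp (l * t) ≤ exp (κ * t) := exp_le_exp.mpr (mul_le_mul_of_nonneg_right hlκ ht)
  rw [abs_div, abs_mul, abs_of_nonneg hgap, abs_of_pos hpos]
  gcongr
  linarith [exp_pos (a * t)]

theorem stmt_13_general (n : ℕ) (α β μ κ ε : ℝ)
    (hε : 0 < ε) (hκ : -μ + ε⁻¹ * α < κ) (k : EuclideanSpace ℝ (Fin n))
    (u₀ v₀ : ℝ) (φ ψ : ℝ → ℝ) (hφ0 : φ 0 = u₀) (hψ0 : ψ 0 = u₀)
    (hφ : ∀ t : ℝ, 0 ≤ t →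
      HasDerivAt φ ((-4 * π ^ 2 * ‖k‖ ^ 2 - μ + ε⁻¹ * α) * φ t
        + (ε⁻¹ * β - α⁻¹ * β * (μ + κ)) * Real.exp ((-4 * π ^ 2 * ‖k‖ ^ 2 + κ) * t) * v₀) t)
    (hψ : ∀ t : ℝ, 0 ≤ t →
      HasDerivAt ψ ((-4 * π ^ 2 * ‖k‖ ^ 2 - μ + ε⁻¹ * α) * ψ t
        + ε⁻¹ * β * Real.exp ((-4 * π ^ 2 * ‖k‖ ^ 2 + κ) * t) * v₀) t) :
    ∀ t : ℝ, 0 ≤ t →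
      |φ t - ψ t| ≤
        ε * (|α⁻¹ * β * (μ + κ)| / (-α + ε * μ + ε * κ)) * Real.exp (κ * t) * |v₀| := by
  set A := -4 * π ^ 2 * ‖k‖ ^ 2 - μ + ε⁻¹ * α
  set B := -4 * π ^ 2 * ‖k‖ ^ 2 + κ
  set c := α⁻¹ * β * (μ + κ)
  have hAB : A < B := by linarith
  have hBκ : B ≤ κ := by linarith [show 0 ≤ 4 * π ^ 2 * ‖k‖ ^ 2 by positivity]
  have hδ := eq_of_hasDerivAt_linear_exp_forcing hAB.ne' (y := fun t => φ t - ψ t)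
    (b := -(c * v₀)) (by simp [hφ0, hψ0])
    (fun t ht => ((hφ t ht).sub (hψ t ht)).congr_deriv (by ring))
  have hscale : -α + ε * μ + ε * κ = ε * (B - A) := by
    simp only [A, B]; field_simp; ring
  intro t ht
  calc |φ t - ψ t| ≤ |-(c * v₀)| * exp (κ * t) / (B - A) := by
        rw [hδ t ht]; exact abs_mul_exp_sub_exp_div_le hAB hBκ ht _
    _ = ε * (|c| / (-α + ε * μ + ε * κ)) * exp (κ * t) * |v₀| := by
        rw [hscale, abs_neg, abs_mul]; field_simp

/-- Second auxiliary Fourier-mode estimate: the Fourier coefficients of the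
corrected auxiliary fast variable `u^{ε,0}` and of `ũ^ε` differ by at most
`ε · (|α⁻¹β(μ + κ)|/(−α + εμ + εκ)) · e^{κt} · |v₀|`. -/
theorem stmt_13 (n : ℕ) (hn : 1 ≤ n) (α β μ κ ε : ℝ) (hα : α < 0) (hβ : β ≠ 0)
    (hε : 0 < ε) (hκ : -μ + ε⁻¹ * α < κ) (k : EuclideanSpace ℝ (Fin n))
    (u₀ v₀ : ℝ) (φ ψ : ℝ → ℝ) (hφ0 : φ 0 = u₀) (hψ0 : ψ 0 = u₀)
    (hφ : ∀ t : ℝ, 0 ≤ t →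
      HasDerivAt φ ((-4 * π ^ 2 * ‖k‖ ^ 2 - μ + ε⁻¹ * α) * φ t
        + (ε⁻¹ * β - α⁻¹ * β * (μ + κ)) * Real.exp ((-4 * π ^ 2 * ‖k‖ ^ 2 + κ) * t) * v₀) t)
    (hψ : ∀ t : ℝ, 0 ≤ t →
      HasDerivAt ψ ((-4 * π ^ 2 * ‖k‖ ^ 2 - μ + ε⁻¹ * α) * ψ t
        + ε⁻¹ * β * Real.exp ((-4 * π ^ 2 * ‖k‖ ^ 2 + κ) * t) * v₀) t) :
    ∀ t : ℝ, 0 ≤ t →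
      |φ t - ψ t| ≤
        ε * (|α⁻¹ * β * (μ + κ)| / (-α + ε * μ + ε * κ)) * Real.exp (κ * t) * |v₀| :=
  stmt_13_general n α β μ κ ε hε hκ k u₀ v₀ φ ψ hφ0 hψ0 hφ hψ
end

section
/- Let α < 0, β ≠ 0, μ, κ ∈ ℝ, and let ε > 0 satisfy −μ + ε⁻¹α < 0. Fix k ∈ ℝⁿ, u₀, v₀ ∈ ℝ, and set A := −4π²‖k‖² − μ + ε⁻¹α. Let φ : ℝ → ℝ be the differentiable function with φ(0) = u₀ satisfying φ′(t) = A·φ(t) + (ε⁻¹β − α⁻¹β(μ + κ))·e^{(−4π²‖k‖² + κ)t}·v₀ for all t ≥ 0. Then for every t ≥ 0: |φ(t) + α⁻¹β·e^{(−4π²‖k‖² + κ)t}·v₀| = e^{A t}·|u₀ + α⁻¹β·v₀| ≤ e^{(−μ + ε⁻¹α)t}·|u₀ + α⁻¹β·v₀|. -/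
open Real

/-
Adding `α⁻¹β e^{Bt} v₀`, with `B = −4π²‖k‖² + κ`, removes the forcing term: the forcing
coefficient is exactly `(A − B) α⁻¹β`, so `ψ := φ + α⁻¹β e^{Bt} v₀` solves `ψ' = Aψ` and hence
`ψ t = e^{At} ψ 0`. The inequality is monotonicity of `exp`, since `A ≤ −μ + ε⁻¹α`.
-/

theorem hasDerivAt_add_const_mul_exp {φ : ℝ → ℝ} {A B c t : ℝ}
    (hφ : HasDerivAt φ (A * φ t + (A - B) * c * exp (B * t)) t) :
    HasDerivAt (fun s => φ s + c * exp (B * s)) (A * (φ t + c * exp (B * t))) t := by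
  have hexp : HasDerivAt (fun s => exp (B * s)) (exp (B * t) * B) t :=
    ((hasDerivAt_id t).const_mul B).exp.congr_deriv (by simp)
  exact (hφ.add (hexp.const_mul c)).congr_deriv (by ring)

theorem eq_exp_mul_of_hasDerivAt_mul_self_s14 {ψ : ℝ → ℝ} {A : ℝ}
    (hψ : ∀ t, 0 ≤ t → HasDerivAt ψ (A * ψ t) t) {t : ℝ} (ht : 0 ≤ t) :
    ψ t = exp (A * t) * ψ 0 := by
  have hderiv : ∀ s, 0 ≤ s → HasDerivAt (fun s => exp (-A * s) * ψ s) 0 s := by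
    intro s hs
    have hexp : HasDerivAt (fun s => exp (-A * s)) (exp (-A * s) * -A) s :=
      ((hasDerivAt_id s).const_mul (-A)).exp.congr_deriv (by simp)
    exact (hexp.mul (hψ s hs)).congr_deriv (by ring)
  have hconst : exp (-A * t) * ψ t = ψ 0 := by
    simpa using constant_of_has_deriv_right_zero
      (fun s hs => (hderiv s hs.1).continuousAt.continuousWithinAt)
      (fun s hs => (hderiv s hs.1).hasDerivWithinAt) t (Set.right_mem_Icc.mpr ht)
  rw [← hconst, ← mul_assoc, ← exp_add]
  simp

theorem stmt_14_general (n : ℕ) (α β μ κ ε : ℝ) (hα : α < 0) (k : EuclideanSpace ℝ (Fin n))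
    (u₀ v₀ : ℝ) (φ : ℝ → ℝ) (hφ0 : φ 0 = u₀)
    (hφ : ∀ t : ℝ, 0 ≤ t →
      HasDerivAt φ ((-4 * π ^ 2 * ‖k‖ ^ 2 - μ + ε⁻¹ * α) * φ t
        + (ε⁻¹ * β - α⁻¹ * β * (μ + κ)) * Real.exp ((-4 * π ^ 2 * ‖k‖ ^ 2 + κ) * t) * v₀) t) :
    ∀ t : ℝ, 0 ≤ t →
      |φ t + α⁻¹ * β * Real.exp ((-4 * π ^ 2 * ‖k‖ ^ 2 + κ) * t) * v₀|
          = Real.exp ((-4 * π ^ 2 * ‖k‖ ^ 2 - μ + ε⁻¹ * α) * t) * |u₀ + α⁻¹ * β * v₀| ∧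
        Real.exp ((-4 * π ^ 2 * ‖k‖ ^ 2 - μ + ε⁻¹ * α) * t) * |u₀ + α⁻¹ * β * v₀|
          ≤ Real.exp ((-μ + ε⁻¹ * α) * t) * |u₀ + α⁻¹ * β * v₀| := by
  intro t ht
  set A := -4 * π ^ 2 * ‖k‖ ^ 2 - μ + ε⁻¹ * α
  set B := -4 * π ^ 2 * ‖k‖ ^ 2 + κ
  have hforcing : ε⁻¹ * β - α⁻¹ * β * (μ + κ) = (A - B) * α⁻¹ * β := by
    field_simp [hα.ne]
    ring
  have hψ : ∀ s, 0 ≤ s → HasDerivAt (fun s => φ s + α⁻¹ * β * v₀ * exp (B * s))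
      (A * (φ s + α⁻¹ * β * v₀ * exp (B * s))) s := fun s hs =>
    hasDerivAt_add_const_mul_exp ((hφ s hs).congr_deriv (by rw [hforcing]; ring))
  have hsol := eq_exp_mul_of_hasDerivAt_mul_self_s14 hψ ht
  simp only [mul_zero, exp_zero, mul_one, hφ0] at hsol
  refine ⟨?_, ?_⟩
  · rw [mul_right_comm _ (exp _), hsol, abs_mul, abs_of_pos (exp_pos _)]
  · have hk : 0 ≤ 4 * π ^ 2 * ‖k‖ ^ 2 := by positivity
    have hA : A ≤ -μ + ε⁻¹ * α := by linarith
    gcongr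

/-- Third auxiliary Fourier-mode estimate: the distance of the Fourier
coefficient of `u^{ε,0}` to the Fourier coefficient of `h⁰(v⁰(t)) = −α⁻¹β v⁰(t)` decays like
`e^{At}|u₀ + α⁻¹β v₀|`, with `A = −4π²‖k‖² − μ + ε⁻¹α ≤ −μ + ε⁻¹α < 0`. -/
theorem stmt_14 (n : ℕ) (hn : 1 ≤ n) (α β μ κ ε : ℝ) (hα : α < 0) (hβ : β ≠ 0)
    (hε : 0 < ε) (hneg : -μ + ε⁻¹ * α < 0) (k : EuclideanSpace ℝ (Fin n))
    (u₀ v₀ : ℝ) (φ : ℝ → ℝ) (hφ0 : φ 0 = u₀)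
    (hφ : ∀ t : ℝ, 0 ≤ t →
      HasDerivAt φ ((-4 * π ^ 2 * ‖k‖ ^ 2 - μ + ε⁻¹ * α) * φ t
        + (ε⁻¹ * β - α⁻¹ * β * (μ + κ)) * Real.exp ((-4 * π ^ 2 * ‖k‖ ^ 2 + κ) * t) * v₀) t) :
    ∀ t : ℝ, 0 ≤ t →
      |φ t + α⁻¹ * β * Real.exp ((-4 * π ^ 2 * ‖k‖ ^ 2 + κ) * t) * v₀|
          = Real.exp ((-4 * π ^ 2 * ‖k‖ ^ 2 - μ + ε⁻¹ * α) * t) * |u₀ + α⁻¹ * β * v₀| ∧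
        Real.exp ((-4 * π ^ 2 * ‖k‖ ^ 2 - μ + ε⁻¹ * α) * t) * |u₀ + α⁻¹ * β * v₀|
          ≤ Real.exp ((-μ + ε⁻¹ * α) * t) * |u₀ + α⁻¹ * β * v₀| :=
  stmt_14_general n α β μ κ ε hα k u₀ v₀ φ hφ0 hφ
end
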